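/- arXiv:1409.6326 — 8 statements merged into one kernel-verified Lean document; each statement's English description precedes it below -/
import Mathlib

section
/- Let V be a finite-dimensional vector space, Γ a locally finite graph, and τ : V^Γ → V^Γ a locally specifiable linear map. If τ is surjective, then its transpose τ' is pre-injective, i.e., τ' is injective on the subspace of finitely supported functions. -/
open Classical

/-- A (simple, undirected, loopless) locally finite graph. -/
structure LGraph (Γ : Type*) where
  Adj : Γ → Γ → Prop
  symm : ∀ {x y}, Adj x y → Adj y x
  loopless : ∀ x, ¬ Adj x x
  locFin : ∀ x, {y | Adj x y}.Finite

/-- `τ` is locally specifiable: `τ(f)(x)` depends only on `f(x)` and the values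
`f(y)` for neighbours `y` of `x`. -/
def LocallySpecifiable {Γ V : Type*} (G : LGraph Γ) (τ : (Γ → V) → (Γ → V)) : Prop :=
  ∀ f g : Γ → V, ∀ x : Γ, f x = g x → (∀ y, G.Adj x y → f y = g y) → τ f x = τ g x

/-- `τ` is pre-injective: injective on finitely supported functions. -/
def PreInjective {Γ V : Type*} [Zero V] (τ : (Γ → V) → (Γ → V)) : Prop :=
  ∀ f g : Γ → V, (Function.support f).Finite → (Function.support g).Finite →
    τ f = τ g → f = g

/-- The basis element `δ_x^i` of finitely supported `K^r`-valued functions. -/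
noncomputable def deltaV {Γ K : Type*} [Semiring K] {r : ℕ} (x : Γ) (i : Fin r) :
    Γ → Fin r → K :=
  fun z => if z = x then Pi.single i 1 else 0

/-- The transpose of a linear map `τ` on `(K^r)^Γ`, given by transposing the
matrix of `τ` with respect to the basis `{δ_x^i}` of finitely supported
functions: `(τ' f)(x)(i) = ∑_{(y,j)} (τ δ_x^i)(y)(j) · f(y)(j)`. -/
noncomputable def transposeOp {Γ K : Type*} [Semiring K] {r : ℕ}
    (τ : (Γ → Fin r → K) → (Γ → Fin r → K)) (f : Γ → Fin r → K)
    (x : Γ) (i : Fin r) : K :=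
  ∑ᶠ p : Γ × Fin r, τ (deltaV x i) p.1 p.2 * f p.1 p.2

/-! If `φ` is finitely supported and `τ' φ = 0`, then by linearity `φ · τ h = 0` for every
finitely supported `h`. Since `τ` is locally specifiable, `τ h` on the support of `φ` only
depends on `h` on the finite neighbourhood of that support, so truncating `h` there gives
`φ · τ h = 0` for all `h`. Surjectivity provides `h` with `τ h = δ_y^j`, and then
`φ(y)ⱼ = φ · δ_y^j = 0`. -/

section Pairing

variable {Γ K : Type*} {r : ℕ}

/-- The duality pairing `h · φ`, meaningful when `φ` is finitely supported;
`transposeOp τ φ x i` is `pairing (τ (deltaV x i)) φ` by definition. -/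
noncomputable def pairing [Semiring K] (h φ : Γ → Fin r → K) : K :=
  ∑ᶠ p : Γ × Fin r, h p.1 p.2 * φ p.1 p.2

theorem deltaV_apply [Semiring K] (x z : Γ) (i k : Fin r) :
    deltaV x i z k = if z = x ∧ k = i then (1 : K) else 0 := by
  by_cases hz : z = x <;> simp [deltaV, hz, Pi.single_apply]

theorem sum_smul_deltaV [Semiring K] {h : Γ → Fin r → K} {N : Finset Γ}
    (hh : ∀ z ∉ N, h z = 0) :
    ∑ q ∈ N ×ˢ Finset.univ, h q.1 q.2 • deltaV q.1 q.2 = h := by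
  ext z k
  by_cases hz : z ∈ N <;>
    simp [Finset.sum_apply, deltaV_apply, ite_and, Finset.sum_product, hz, hh]

theorem pairing_deltaV_left [Semiring K] (φ : Γ → Fin r → K) (y : Γ) (j : Fin r) :
    pairing (deltaV y j) φ = φ y j := by
  rw [pairing, finsum_eq_single _ (y, j) fun p hp => ?_]
  · simp [deltaV_apply]
  · have : ¬ (p.1 = y ∧ p.2 = j) := fun h => hp (Prod.ext h.1 h.2)
    simp [deltaV_apply, this]

theorem pairing_eq_sum [Semiring K] {φ : Γ → Fin r → K} {S : Finset Γ}
    (hφ : ∀ z ∉ S, φ z = 0) (h : Γ → Fin r → K) :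
    pairing h φ = ∑ p ∈ S ×ˢ Finset.univ, h p.1 p.2 * φ p.1 p.2 := by
  refine finsum_eq_sum_of_support_subset _ fun p hp => ?_
  by_contra hpS
  have hp1 : p.1 ∉ S := by simpa using hpS
  simp [hφ p.1 hp1] at hp

theorem pairing_congr_left [Semiring K] {φ h h' : Γ → Fin r → K} {S : Set Γ}
    (hφ : ∀ z ∉ S, φ z = 0) (hh : ∀ z ∈ S, h z = h' z) :
    pairing h φ = pairing h' φ := by
  refine finsum_congr fun p => ?_
  by_cases hp : p.1 ∈ S
  · rw [hh p.1 hp]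
  · simp [hφ p.1 hp]

theorem pairing_sum_smul_left [CommSemiring K] {φ : Γ → Fin r → K} {S : Finset Γ}
    (hφ : ∀ z ∉ S, φ z = 0) {ι : Type*} (B : Finset ι) (c : ι → K)
    (h : ι → Γ → Fin r → K) :
    pairing (∑ q ∈ B, c q • h q) φ = ∑ q ∈ B, c q * pairing (h q) φ := by
  simp only [pairing_eq_sum hφ, Finset.sum_apply, Pi.smul_apply, smul_eq_mul,
    Finset.sum_mul, Finset.mul_sum, mul_assoc]
  exact Finset.sum_comm

theorem pairing_sub_right [Ring K] {f g : Γ → Fin r → K} {S : Finset Γ}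
    (hf : ∀ z ∉ S, f z = 0) (hg : ∀ z ∉ S, g z = 0) (h : Γ → Fin r → K) :
    pairing h (f - g) = pairing h f - pairing h g := by
  have hfg : ∀ z ∉ S, (f - g) z = 0 := fun z hz => by simp [hf z hz, hg z hz]
  simp only [pairing_eq_sum hfg, pairing_eq_sum hf, pairing_eq_sum hg, ← Finset.sum_sub_distrib,
    Pi.sub_apply, mul_sub]

theorem transposeOp_sub [Ring K] (τ : (Γ → Fin r → K) → (Γ → Fin r → K))
    {f g : Γ → Fin r → K} {S : Finset Γ} (hf : ∀ z ∉ S, f z = 0) (hg : ∀ z ∉ S, g z = 0) :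
    transposeOp τ (f - g) = transposeOp τ f - transposeOp τ g := by
  funext x i
  exact pairing_sub_right hf hg _

theorem pairing_map_eq_zero_of_transposeOp_eq_zero [CommSemiring K]
    (τ : (Γ → Fin r → K) →ₗ[K] (Γ → Fin r → K)) {φ h : Γ → Fin r → K} {S N : Finset Γ}
    (hτφ : transposeOp τ φ = 0) (hφ : ∀ z ∉ S, φ z = 0) (hh : ∀ z ∉ N, h z = 0) :
    pairing (τ h) φ = 0 := by
  rw [← sum_smul_deltaV hh, map_sum]
  simp only [map_smul]
  rw [pairing_sum_smul_left hφ]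
  refine Finset.sum_eq_zero fun q _ => ?_
  have hq : pairing (τ (deltaV q.1 q.2)) φ = 0 := congrFun (congrFun hτφ q.1) q.2
  rw [hq, mul_zero]

end Pairing

theorem LocallySpecifiable.exists_vanishing_eqOn {Γ V : Type*} [Zero V] {G : LGraph Γ}
    {τ : (Γ → V) → (Γ → V)} (hτ : LocallySpecifiable G τ) (S : Finset Γ) (h : Γ → V) :
    ∃ N : Finset Γ, ∃ h₀ : Γ → V, (∀ z ∉ N, h₀ z = 0) ∧ ∀ z ∈ S, τ h₀ z = τ h z := by
  set N := S ∪ S.biUnion fun z => (G.locFin z).toFinset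
  refine ⟨N, (N : Set Γ).indicator h, fun z hz => Set.indicator_of_notMem hz h,
    fun z hz => hτ _ _ z ?_ fun y hy => ?_⟩
  · exact Set.indicator_of_mem (Finset.mem_union_left _ hz) h
  · exact Set.indicator_of_mem
      (Finset.mem_union_right _ (Finset.mem_biUnion.2 ⟨z, hz, by simpa using hy⟩)) h

theorem eq_zero_of_transposeOp_eq_zero {Γ K : Type*} [CommSemiring K] {r : ℕ} {G : LGraph Γ}
    {τ : (Γ → Fin r → K) →ₗ[K] (Γ → Fin r → K)} (hloc : LocallySpecifiable G τ)
    (hsurj : Function.Surjective τ) {φ : Γ → Fin r → K} {S : Finset Γ}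
    (hφ : ∀ z ∉ S, φ z = 0) (hτφ : transposeOp τ φ = 0) : φ = 0 := by
  funext y j
  obtain ⟨h, hh⟩ := hsurj (deltaV y j)
  obtain ⟨N, h₀, hh₀, hτh₀⟩ := hloc.exists_vanishing_eqOn S h
  calc φ y j = pairing (deltaV y j) φ := (pairing_deltaV_left φ y j).symm
    _ = pairing (τ h) φ := by rw [hh]
    _ = pairing (τ h₀) φ := pairing_congr_left hφ fun z hz => (hτh₀ z hz).symm
    _ = 0 := pairing_map_eq_zero_of_transposeOp_eq_zero τ hτφ hφ hh₀

/-- If a locally specifiable linear map `τ : V^Γ → V^Γ` (with `V = K^r`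
finite-dimensional) is surjective, then its transpose is pre-injective. -/
theorem preInjective_transpose_of_surjective {Γ K : Type*} [Field K] {r : ℕ}
    (G : LGraph Γ) (τ : (Γ → Fin r → K) →ₗ[K] (Γ → Fin r → K))
    (hloc : LocallySpecifiable G τ)
    (hsurj : Function.Surjective τ) :
    PreInjective (transposeOp (⇑τ)) := by
  intro f g hf hg hfg
  set S := hf.toFinset ∪ hg.toFinset
  have hfS : ∀ z ∉ S, f z = 0 := fun z hz => by simpa using (Finset.notMem_union.1 hz).1
  have hgS : ∀ z ∉ S, g z = 0 := fun z hz => by simpa using (Finset.notMem_union.1 hz).2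
  have hS : ∀ z ∉ S, (f - g) z = 0 := fun z hz => by simp [hfS z hz, hgS z hz]
  refine sub_eq_zero.1 (eq_zero_of_transposeOp_eq_zero hloc hsurj hS ?_)
  rw [transposeOp_sub _ hfS hgS, hfg, sub_self]
end

section
/- Let V be a finite-dimensional vector space, Γ a locally finite graph, and τ : V^Γ → V^Γ a locally specifiable linear map. If the transpose τ' is pre-injective then τ is surjective. Combined with the converse, τ is surjective if and only if τ' is pre-injective. -/
open Classical

/-! Locality makes every coordinate of `τ u` a finite linear combination of coordinates of `u`.
Hence, identifying `V^Γ` with the algebraic dual of the finitely supported functions, `τ` is the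
dual map of the transpose `τ'` restricted to finitely supported functions. Over a field the dual
of a linear map is surjective exactly when the map is injective. -/

namespace LinearMap

variable {K α β : Type*} [Field K]

def HasFiniteMemory (τ : (α → K) →ₗ[K] (β → K)) : Prop :=
  ∀ b, ∃ s : Finset α, ∀ u : α → K, (∀ a ∈ s, u a = 0) → τ u b = 0

theorem support_apply_single_subset [DecidableEq α] {τ : (α → K) →ₗ[K] (β → K)} {b : β}
    {s : Finset α} (hs : ∀ u : α → K, (∀ a ∈ s, u a = 0) → τ u b = 0) :
    (fun a => τ (Pi.single a 1) b).support ⊆ s := fun a ha => by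
  by_contra has
  exact ha (hs _ fun a' ha' => Pi.single_eq_of_ne (ne_of_mem_of_not_mem ha' has) 1)

namespace HasFiniteMemory

variable [DecidableEq α] {τ : (α → K) →ₗ[K] (β → K)} (hτ : τ.HasFiniteMemory)
include hτ

theorem finite_support_apply_single (b : β) :
    (fun a => τ (Pi.single a 1) b).support.Finite :=
  have ⟨s, hs⟩ := hτ b
  s.finite_toSet.subset (support_apply_single_subset hs)

theorem apply_eq_finsum (u : α → K) (b : β) :
    τ u b = ∑ᶠ a, τ (Pi.single a 1) b * u a := by
  obtain ⟨s, hs⟩ := hτ b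
  have hvanish : τ (u - ∑ a ∈ s, u a • Pi.single a 1) b = 0 :=
    hs _ fun a ha => by simp [Finset.sum_apply, Pi.single_apply, ha]
  rw [map_sub, Pi.sub_apply, sub_eq_zero] at hvanish
  rw [finsum_eq_sum_of_support_subset _
    ((Function.support_mul_subset_left _ _).trans (support_apply_single_subset hs))]
  simp [hvanish, Finset.sum_apply, mul_comm]

/-- The map on finitely supported functions whose matrix is the transpose of that of `τ`. -/
noncomputable def predual : (β →₀ K) →ₗ[K] (α →₀ K) :=
  Finsupp.linearCombination K fun b =>
    Finsupp.ofSupportFinite _ (hτ.finite_support_apply_single b)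

theorem predual_apply (l : β →₀ K) (a : α) :
    hτ.predual l a = ∑ᶠ b, τ (Pi.single a 1) b * l b := by
  rw [predual, Finsupp.linearCombination_apply, Finsupp.sum, Finset.sum_apply',
    finsum_eq_sum_of_support_subset _ (s := l.support) ?_]
  · simp [Finsupp.ofSupportFinite_coe, mul_comm]
  · intro b hb
    exact Finsupp.mem_support_iff.2 (right_ne_zero_of_mul hb)

theorem dualMap_predual_llift (u : α → K) :
    hτ.predual.dualMap (Finsupp.llift K K K α u) = Finsupp.llift K K K β (τ u) := by
  ext b
  simp only [LinearMap.comp_apply, Finsupp.lsingle_apply, LinearMap.dualMap_apply,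
    Finsupp.llift_apply, Finsupp.lift_apply, predual, Finsupp.linearCombination_single, one_smul]
  rw [Finsupp.sum_single_index (by simp), one_smul, hτ.apply_eq_finsum, Finsupp.sum,
    finsum_eq_sum_of_support_subset
    (s := (Finsupp.ofSupportFinite _ (hτ.finite_support_apply_single b)).support)]
  · rfl
  · exact (Function.support_mul_subset_left _ _).trans (by simp [Finsupp.ofSupportFinite_coe])

theorem surjective_iff_injective_predual :
    Function.Surjective τ ↔ Function.Injective hτ.predual := by
  have : ⇑τ = (Finsupp.llift K K K β).symm ∘ hτ.predual.dualMap ∘ Finsupp.llift K K K α := by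
    funext u
    simp [dualMap_predual_llift]
  rw [← LinearMap.dualMap_surjective_iff, this, EquivLike.comp_surjective,
    EquivLike.surjective_comp]

end HasFiniteMemory

end LinearMap

theorem LinearEquiv.surjective_conj_iff {R M N : Type*} [CommSemiring R] [AddCommMonoid M]
    [Module R M] [AddCommMonoid N] [Module R N] (e : M ≃ₗ[R] N) (f : Module.End R M) :
    Function.Surjective (e.conj f) ↔ Function.Surjective f := by
  rw [LinearEquiv.conj_apply, LinearMap.coe_comp, LinearMap.coe_comp, LinearEquiv.coe_coe,
    LinearEquiv.coe_coe, EquivLike.surjective_comp, EquivLike.comp_surjective]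

theorem Function.support_finite_iff_exists_finsupp_curry {α β M : Type*} [Zero M] [Finite β]
    {f : α → β → M} : f.support.Finite ↔ ∃ l : α × β →₀ M, Function.curry ⇑l = f := by
  constructor
  · intro hf
    have huncurry : (Function.uncurry f).support ⊆ f.support ×ˢ Set.univ :=
      fun p hp => ⟨fun h => hp (congrFun h p.2), trivial⟩
    exact ⟨Finsupp.ofSupportFinite _ ((hf.prod Set.finite_univ).subset huncurry), rfl⟩
  · rintro ⟨l, rfl⟩
    refine (l.support.finite_toSet.image Prod.fst).subset fun a ha => ?_
    obtain ⟨b, hb⟩ := Function.ne_iff.1 ha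
    exact ⟨(a, b), Finsupp.mem_support_iff.2 hb, rfl⟩

theorem preInjective_iff_injective_of_curry {α β M : Type*} [Zero M] [Finite β]
    {T : (α → β → M) → α → β → M} {B : (α × β →₀ M) → α × β →₀ M}
    (hTB : ∀ l : α × β →₀ M, T (Function.curry ⇑l) = Function.curry ⇑(B l)) :
    PreInjective T ↔ Function.Injective B := by
  have hcurry : Function.Injective fun l : α × β →₀ M => Function.curry ⇑l :=
    Function.curry_injective.comp DFunLike.coe_injective
  constructor
  · intro hT l l' h
    apply hcurry
    refine hT _ _ (Function.support_finite_iff_exists_finsupp_curry.2 ⟨l, rfl⟩)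
      (Function.support_finite_iff_exists_finsupp_curry.2 ⟨l', rfl⟩) ?_
    rw [hTB, hTB, h]
  · intro hB f g hf hg h
    obtain ⟨l, rfl⟩ := Function.support_finite_iff_exists_finsupp_curry.1 hf
    obtain ⟨l', rfl⟩ := Function.support_finite_iff_exists_finsupp_curry.1 hg
    rw [hTB, hTB] at h
    rw [hB (hcurry h)]

section LocallySpecifiable

variable {Γ K : Type*} [Field K] {r : ℕ}

theorem deltaV_eq_curry_single (x : Γ) (i : Fin r) :
    (deltaV x i : Γ → Fin r → K) = Function.curry (Pi.single (x, i) 1) := by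
  funext y j
  by_cases hy : y = x
  · subst hy
    simp [deltaV, Pi.single_apply]
  · simp [deltaV, hy]

theorem LocallySpecifiable.hasFiniteMemory {G : LGraph Γ}
    {τ : (Γ → Fin r → K) →ₗ[K] (Γ → Fin r → K)} (hloc : LocallySpecifiable G τ) :
    ((LinearEquiv.curry K K Γ (Fin r)).symm.conj τ).HasFiniteMemory := by
  rintro ⟨y, j⟩
  refine ⟨insert y (G.locFin y).toFinset ×ˢ Finset.univ, fun u hu => ?_⟩
  have hτu : τ (Function.curry u) y = τ 0 y :=
    hloc _ _ y (funext fun i => hu _ (by simp)) fun z hz => funext fun i => hu _ (by simp [hz])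
  simp [LinearEquiv.conj_apply_apply, hτu]

theorem LocallySpecifiable.transposeOp_curry {G : LGraph Γ}
    {τ : (Γ → Fin r → K) →ₗ[K] (Γ → Fin r → K)} (hloc : LocallySpecifiable G τ)
    (l : Γ × Fin r →₀ K) :
    transposeOp τ (Function.curry ⇑l) = Function.curry ⇑(hloc.hasFiniteMemory.predual l) := by
  funext x i
  rw [Function.curry_apply, LinearMap.HasFiniteMemory.predual_apply, transposeOp,
    deltaV_eq_curry_single]
  simp only [LinearEquiv.conj_apply_apply, LinearEquiv.symm_symm, LinearEquiv.coe_curry,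
    LinearEquiv.coe_curry_symm]
  rfl

end LocallySpecifiable

/-- Garden of Eden theorem for locally specifiable linear maps: a locally
specifiable linear map `τ : V^Γ → V^Γ` (with `V = K^r` finite-dimensional) on a
locally finite graph is surjective if and only if its transpose is
pre-injective. -/
theorem surjective_iff_transpose_preInjective {Γ K : Type*} [Field K] {r : ℕ}
    (G : LGraph Γ) (τ : (Γ → Fin r → K) →ₗ[K] (Γ → Fin r → K))
    (hloc : LocallySpecifiable G τ) :
    Function.Surjective τ ↔ PreInjective (transposeOp (⇑τ)) := by
  rw [preInjective_iff_injective_of_curry hloc.transposeOp_curry,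
    ← hloc.hasFiniteMemory.surjective_iff_injective_predual, LinearEquiv.surjective_conj_iff]
end

section
/- Let V be a finite-dimensional vector space over a field, let Γ be a connected, locally finite graph with a distinguished vertex e, and let τ : V^Γ → V^Γ be a locally specifiable linear map. Suppose f : Γ → V is such that for every n there exists v_n : Γ → V with τ(v_n) agreeing with f on the ball B(n) of radius n about e. Then there exists w : Γ → V with τ(w) = f. -/
open Classical

/-- The ball of radius `n` about `e` in a graph. -/
def LGraph.ball {Γ : Type*} (G : LGraph Γ) (e : Γ) : ℕ → Set Γ
  | 0 => {e}
  | n + 1 => LGraph.ball G e n ∪ {z | ∃ u ∈ LGraph.ball G e n, G.Adj u z}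

/-!
Homogenize: the pairs `(v, c)` with `τ v = c • f` on `B(m)` form a subspace `U m`, decreasing
in `m`, while the pairs with `c = 0` and `v = 0` on `B(n)` form a subspace `N n` of finite
codimension. Modulo `N n` the chain `U m` stabilizes, so `L n = ⋂ m, (U m + N n)` equals
`U M + N n` for large `M`; in particular every element of `L n` lifts modulo `N n` to `L (n + 1)`.
Lifting `(v, 1) ∈ L 0` step by step gives functions agreeing on larger and larger balls; their
limit `w` agrees on `B(n + 1)` with an exact solution on `B(n)`, so `τ w = f` on `B(n)` by
local specifiability.
-/

open Set

namespace LGraph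

variable {Γ : Type*} (G : LGraph Γ) (e : Γ)

theorem ball_mono : Monotone (G.ball e) :=
  monotone_nat_of_le_succ fun _ _ hz => Or.inl hz

variable {G e} in
theorem mem_ball_succ_of_adj {x y : Γ} {n : ℕ} (hx : x ∈ G.ball e n) (hxy : G.Adj x y) :
    y ∈ G.ball e (n + 1) :=
  Or.inr ⟨x, hx, hxy⟩

theorem finite_ball (n : ℕ) : (G.ball e n).Finite := by
  induction n with
  | zero => exact finite_singleton e
  | succ n ih =>
    have hnbhd : {z | ∃ u ∈ G.ball e n, G.Adj u z} = ⋃ u ∈ G.ball e n, {z | G.Adj u z} := by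
      ext z; simp
    exact ih.union (hnbhd ▸ ih.biUnion fun u _ => G.locFin u)

variable {G e} in
theorem exists_mem_ball_of_reflTransGen {x : Γ} (h : Relation.ReflTransGen G.Adj e x) :
    ∃ n, x ∈ G.ball e n := by
  induction h with
  | refl => exact ⟨0, rfl⟩
  | tail _ hadj ih =>
    obtain ⟨n, hn⟩ := ih
    exact ⟨n + 1, mem_ball_succ_of_adj hn hadj⟩

end LGraph

theorem LocallySpecifiable.apply_eq_of_eqOn_ball_succ {Γ V : Type*} {G : LGraph Γ} {e : Γ}
    {τ : (Γ → V) → (Γ → V)} (hloc : LocallySpecifiable G τ) {v w : Γ → V} {n : ℕ}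
    (h : EqOn v w (G.ball e (n + 1))) {x : Γ} (hx : x ∈ G.ball e n) : τ v x = τ w x :=
  hloc v w x (h (G.ball_mono e n.le_succ hx)) fun _ hxy => h (LGraph.mem_ball_succ_of_adj hx hxy)

theorem exists_eqOn_of_eqOn_succ {α β : Type*} {S : ℕ → Set α} (hS : Monotone S)
    (g : ℕ → α → β) (hg : ∀ n, EqOn (g (n + 1)) (g n) (S n)) :
    ∃ w : α → β, ∀ n, EqOn w (g n) (S n) := by
  have hcompat : ∀ k n, k ≤ n → EqOn (g n) (g k) (S k) := by
    intro k n hkn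
    induction n, hkn using Nat.le_induction with
    | base => exact fun _ _ => rfl
    | succ n hkn ih => exact fun x hx => (hg n (hS hkn hx)).trans (ih hx)
  refine ⟨fun x => if h : ∃ n, x ∈ S n then g (Nat.find h) x else g 0 x, fun n x hx => ?_⟩
  have h : ∃ n, x ∈ S n := ⟨n, hx⟩
  simp only [dif_pos h]
  exact (hcompat _ n (Nat.find_min' h hx) (Nat.find_spec h)).symm

namespace Submodule

variable {R W : Type*} [Ring R] [AddCommGroup W] [Module R W]

theorem exists_iInf_sup_eq_of_antitone {U : ℕ → Submodule R W} (hU : Antitone U)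
    (N : Submodule R W) [IsArtinian R (W ⧸ N)] : ∃ M, ⨅ m, U m ⊔ N = U M ⊔ N := by
  obtain ⟨M, hM⟩ := IsArtinian.monotone_stabilizes
    (⟨fun m => OrderDual.toDual ((U m).map N.mkQ), fun _ _ h => map_mono (hU h)⟩ :
      ℕ →o (Submodule R (W ⧸ N))ᵒᵈ)
  have hstable : ∀ m, M ≤ m → U m ⊔ N = U M ⊔ N := fun m hm => by
    rw [sup_comm, ← comap_map_mkQ, sup_comm, ← comap_map_mkQ]
    exact congrArg (comap N.mkQ ∘ OrderDual.ofDual) (hM m hm).symm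
  refine ⟨M, le_antisymm (iInf_le _ M) (le_iInf fun m => ?_)⟩
  rcases le_total m M with h | h
  · exact sup_le_sup_right (hU h) N
  · exact (hstable m h).ge

variable {U N : ℕ → Submodule R W}

theorem iInf_sup_le_iInf_sup_succ_sup (hU : Antitone U) (hN : Antitone N) (n : ℕ)
    [IsArtinian R (W ⧸ N (n + 1))] :
    ⨅ m, U m ⊔ N n ≤ (⨅ m, U m ⊔ N (n + 1)) ⊔ N n := by
  obtain ⟨M, hM⟩ := exists_iInf_sup_eq_of_antitone hU (N (n + 1))
  rw [hM, sup_assoc, sup_eq_right.mpr (hN n.le_succ)]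
  exact iInf_le _ M

/-- Mittag-Leffler for the inverse system of the quotients `W ⧸ N n`. -/
theorem exists_seq_sub_mem_of_antitone (hU : Antitone U) (hN : Antitone N)
    [∀ n, IsArtinian R (W ⧸ N n)] {p₀ : W} (hp₀ : p₀ ∈ ⨅ m, U m ⊔ N 0) :
    ∃ p : ℕ → W, p 0 = p₀ ∧ (∀ n, p n ∈ ⨅ m, U m ⊔ N n) ∧ ∀ n, p (n + 1) - p n ∈ N n := by
  have hlift : ∀ n, ∀ q ∈ ⨅ m, U m ⊔ N n, ∃ q' ∈ ⨅ m, U m ⊔ N (n + 1), q' - q ∈ N n := by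
    intro n q hq
    obtain ⟨a, ha, b, hb, rfl⟩ := mem_sup.mp (iInf_sup_le_iInf_sup_succ_sup hU hN n hq)
    exact ⟨a, ha, by simpa using neg_mem hb⟩
  choose lift hliftL hliftN using hlift
  let seq (n : ℕ) : ↥(⨅ m, U m ⊔ N n) :=
    Nat.rec ⟨p₀, hp₀⟩ (fun k q => ⟨lift k q q.2, hliftL k q q.2⟩) n
  exact ⟨fun n => (seq n).1, rfl, fun n => (seq n).2, fun n => hliftN n _ (seq n).2⟩

end Submodule

section Homogenized

variable {Γ K V : Type*} [Ring K] [AddCommGroup V] [Module K V]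

def homogenizedSolutions (τ : (Γ → V) →ₗ[K] (Γ → V)) (f : Γ → V) (S : Set Γ) :
    Submodule K ((Γ → V) × K) where
  carrier := {p | ∀ x ∈ S, τ p.1 x = p.2 • f x}
  add_mem' {a b} ha hb x hx := by
    simp only [Prod.fst_add, Prod.snd_add, map_add, Pi.add_apply, ha x hx, hb x hx, add_smul]
  zero_mem' x _ := by simp
  smul_mem' c a ha x hx := by
    simp only [Prod.smul_fst, Prod.smul_snd, map_smul, Pi.smul_apply, ha x hx, smul_eq_mul,
      mul_smul]

theorem homogenizedSolutions_anti (τ : (Γ → V) →ₗ[K] (Γ → V)) (f : Γ → V) :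
    Antitone (homogenizedSolutions τ f) :=
  fun _ _ hST _ hp x hx => hp x (hST hx)

variable (K V) in
def restrictHomogenized (S : Set Γ) : ((Γ → V) × K) →ₗ[K] ((S → V) × K) :=
  (LinearMap.funLeft K V ((↑) : S → Γ)).prodMap LinearMap.id

theorem mem_ker_restrictHomogenized_iff {S : Set Γ} {p : (Γ → V) × K} :
    p ∈ LinearMap.ker (restrictHomogenized K V S) ↔ (∀ x ∈ S, p.1 x = 0) ∧ p.2 = 0 := by
  simp [restrictHomogenized, LinearMap.funLeft, funext_iff]

theorem sub_mem_ker_restrictHomogenized_iff {S : Set Γ} {p q : (Γ → V) × K} :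
    p - q ∈ LinearMap.ker (restrictHomogenized K V S) ↔ EqOn p.1 q.1 S ∧ p.2 = q.2 := by
  simp only [mem_ker_restrictHomogenized_iff, Prod.fst_sub, Prod.snd_sub, Pi.sub_apply, sub_eq_zero]
  rfl

theorem ker_restrictHomogenized_anti :
    Antitone fun S : Set Γ => LinearMap.ker (restrictHomogenized K V S) := by
  intro S T hST p hp
  rw [mem_ker_restrictHomogenized_iff] at hp ⊢
  exact ⟨fun x hx => hp.1 x (hST hx), hp.2⟩

theorem isArtinian_quotient_ker_restrictHomogenized [IsArtinianRing K] [Module.Finite K V]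
    {S : Set Γ} (hS : S.Finite) :
    IsArtinian K (((Γ → V) × K) ⧸ LinearMap.ker (restrictHomogenized K V S)) :=
  have := hS.to_subtype
  isArtinian_of_linearEquiv (LinearMap.quotKerEquivRange _).symm

theorem exists_eqOn_of_mem_homogenizedSolutions_sup {τ : (Γ → V) →ₗ[K] (Γ → V)}
    {f : Γ → V} {S T : Set Γ} {p : (Γ → V) × K}
    (hp : p ∈ homogenizedSolutions τ f S ⊔ LinearMap.ker (restrictHomogenized K V T))
    (hp₂ : p.2 = 1) : ∃ u : Γ → V, (∀ x ∈ S, τ u x = f x) ∧ EqOn p.1 u T := by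
  obtain ⟨u, hu, q, hq, rfl⟩ := Submodule.mem_sup.mp hp
  obtain ⟨hEq, hsnd⟩ := sub_mem_ker_restrictHomogenized_iff.mp (show u + q - u ∈ _ by simpa)
  refine ⟨u.1, fun x hx => ?_, hEq⟩
  rw [hu x hx, ← hsnd, hp₂, one_smul]

end Homogenized

/-- Closure lemma (Ceccherini-Silberstein–Coornaert): if `f` agrees on every
ball with some element of the image of a locally specifiable linear map `τ` on a
connected, locally finite graph, then `f` itself lies in the image of `τ`. -/
theorem image_closed_of_approx {Γ K V : Type*} [Field K] [AddCommGroup V]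
    [Module K V] [FiniteDimensional K V]
    (G : LGraph Γ) (e : Γ)
    (hconn : ∀ x : Γ, Relation.ReflTransGen G.Adj e x)
    (τ : (Γ → V) →ₗ[K] (Γ → V)) (hloc : LocallySpecifiable G τ)
    (f : Γ → V)
    (happrox : ∀ n : ℕ, ∃ v : Γ → V, ∀ x ∈ G.ball e n, τ v x = f x) :
    ∃ w : Γ → V, τ w = f := by
  set U := fun n => homogenizedSolutions τ f (G.ball e n)
  set N := fun n => LinearMap.ker (restrictHomogenized K V (G.ball e n))
  have hU : Antitone U := (homogenizedSolutions_anti τ f).comp_monotone (G.ball_mono e)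
  have hN : Antitone N := ker_restrictHomogenized_anti.comp_monotone (G.ball_mono e)
  have (n : ℕ) : IsArtinian K (_ ⧸ N n) :=
    isArtinian_quotient_ker_restrictHomogenized (G.finite_ball e n)
  obtain ⟨M, hM⟩ := Submodule.exists_iInf_sup_eq_of_antitone hU (N 0)
  obtain ⟨v, hv⟩ := happrox M
  have hv₀ : (v, (1 : K)) ∈ ⨅ m, U m ⊔ N 0 :=
    hM ▸ Submodule.mem_sup_left fun x hx => by simpa using hv x hx
  obtain ⟨p, hp₀, hpL, hpN⟩ := Submodule.exists_seq_sub_mem_of_antitone hU hN hv₀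
  have hstep (n : ℕ) := sub_mem_ker_restrictHomogenized_iff.mp (hpN n)
  have hp₂ (n : ℕ) : (p n).2 = 1 := by
    induction n with
    | zero => rw [hp₀]
    | succ n ih => rw [(hstep n).2, ih]
  obtain ⟨w, hw⟩ := exists_eqOn_of_eqOn_succ (G.ball_mono e) (fun n => (p n).1) (hstep · |>.1)
  refine ⟨w, funext fun x => ?_⟩
  obtain ⟨n, hn⟩ := LGraph.exists_mem_ball_of_reflTransGen (hconn x)
  obtain ⟨u, hu, hpu⟩ :=
    exists_eqOn_of_mem_homogenizedSolutions_sup (Submodule.mem_iInf _ |>.mp (hpL (n + 1)) n)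
      (hp₂ (n + 1))
  calc τ w x = τ u x := hloc.apply_eq_of_eqOn_ball_succ ((hw (n + 1)).trans hpu) hn
    _ = f x := hu x hn
end

section
/- The Laplacian on an infinite, connected, locally finite weighted graph Γ is surjective as a linear map from ℝ^Γ to ℝ^Γ. -/
/-!
The Laplacian on `ℝ^V` is the algebraic transpose of `Δᵀ = id - Pᵀ` acting on finitely supported
functions `V →₀ ℝ`, where `P x y = ω_xy / deg x` is the transition matrix of the random walk:
`Δ f x = ⟨f, Δᵀ δ_x⟩`. Since `ℝ^V` is the dual space of `V →₀ ℝ`, `Δ` is surjective as soon as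
`Δᵀ` is injective. If `Δᵀ h = 0` then, by reversibility (`deg x * P x y = ω_xy` is symmetric),
`h / deg` is a finitely supported harmonic function. By the maximum principle it is constant on
the connected graph, hence zero because the graph is infinite.
-/

/-- A weighted graph: undirected, loopless, locally finite, with symmetric
positive edge weights. -/
structure WGraph (V : Type*) where
  Adj : V → V → Prop
  symm : ∀ {x y}, Adj x y → Adj y x
  loopless : ∀ x, ¬ Adj x x
  w : V → V → ℝ
  w_symm : ∀ x y, w x y = w y x
  w_pos : ∀ {x y}, Adj x y → 0 < w x y
  locFin : ∀ x, {y | Adj x y}.Finite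

namespace WGraph

variable {V : Type*} (G : WGraph V)

/-- The (weighted) degree of a vertex. -/
noncomputable def deg (x : V) : ℝ := ∑ᶠ y ∈ {y | G.Adj x y}, G.w x y

/-- The Laplacian `Δf(x) = f(x) - (1/deg x) ∑_{y∼x} ω_{xy} f(y)`. -/
noncomputable def lap (f : V → ℝ) (x : V) : ℝ :=
  f x - (1 / G.deg x) * ∑ᶠ y ∈ {y | G.Adj x y}, G.w x y * f y

/-- `f` is harmonic on `G`. -/
def Harmonic (f : V → ℝ) : Prop := ∀ x, G.lap f x = 0

end WGraph

lemma exists_forall_le_of_finite_support {α β : Type*} [Infinite α] [Zero β] [LinearOrder β]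
    {u : α → β} (hs : (Function.support u).Finite) : ∃ x, ∀ y, u y ≤ u x := by
  classical
  obtain ⟨z, hz⟩ := Infinite.exists_notMem_finset hs.toFinset
  obtain ⟨x, -, hx⟩ := (insert z hs.toFinset).exists_max_image u (Finset.insert_nonempty _ _)
  refine ⟨x, fun y => ?_⟩
  by_cases hy : u y = 0
  · rw [hy, ← Function.notMem_support.mp (by simpa using hz)]
    exact hx z (Finset.mem_insert_self _ _)
  · exact hx y (Finset.mem_insert_of_mem (by simpa using hy))

namespace WGraph

variable {V : Type*} (G : WGraph V)

noncomputable def nbr (x : V) : Finset V := (G.locFin x).toFinset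

variable {G} in
lemma mem_nbr {x y : V} : y ∈ G.nbr x ↔ G.Adj x y := by
  simp [nbr]

lemma deg_eq_sum (x : V) : G.deg x = ∑ y ∈ G.nbr x, G.w x y := by
  rw [deg, ← (G.locFin x).coe_toFinset, finsum_mem_coe_finset]; rfl

lemma lap_eq_sum (f : V → ℝ) (x : V) :
    G.lap f x = f x - (1 / G.deg x) * ∑ y ∈ G.nbr x, G.w x y * f y := by
  rw [lap, ← (G.locFin x).coe_toFinset, finsum_mem_coe_finset]; rfl

lemma deg_pos_of_adj {x y : V} (hxy : G.Adj x y) : 0 < G.deg x := by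
  rw [deg_eq_sum]
  exact Finset.sum_pos (fun z hz => G.w_pos (mem_nbr.mp hz)) ⟨y, mem_nbr.mpr hxy⟩

lemma deg_pos [Nontrivial V] (hconn : ∀ x y : V, Relation.ReflTransGen G.Adj x y) (x : V) :
    0 < G.deg x := by
  obtain ⟨y, hyx⟩ := exists_ne x
  rcases (hconn x y).cases_head with h | ⟨z, hxz, -⟩
  · exact absurd h.symm hyx
  · exact G.deg_pos_of_adj hxz

variable {G}

lemma Harmonic.eq_of_adj_of_forall_le {u : V → ℝ} (hu : G.Harmonic u) {x y : V}
    (hmax : ∀ z, u z ≤ u x) (hxy : G.Adj x y) : u y = u x := by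
  refine le_antisymm (hmax y) (not_lt.mp fun hlt => ?_)
  have hdeg := G.deg_pos_of_adj hxy
  have hmean : G.deg x * u x = ∑ z ∈ G.nbr x, G.w x z * u z := by
    have := hu x
    rw [lap_eq_sum] at this
    field_simp at this
    linarith
  have hlt_sum : ∑ z ∈ G.nbr x, G.w x z * u z < ∑ z ∈ G.nbr x, G.w x z * u x :=
    Finset.sum_lt_sum
      (fun z hz => mul_le_mul_of_nonneg_left (hmax z) (G.w_pos (mem_nbr.mp hz)).le)
      ⟨y, mem_nbr.mpr hxy, mul_lt_mul_of_pos_left hlt (G.w_pos hxy)⟩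
  rw [← Finset.sum_mul, ← deg_eq_sum, ← hmean] at hlt_sum
  exact lt_irrefl _ hlt_sum

lemma Harmonic.eq_of_forall_le (hconn : ∀ x y : V, Relation.ReflTransGen G.Adj x y)
    {u : V → ℝ} (hu : G.Harmonic u) {x : V} (hmax : ∀ z, u z ≤ u x) (y : V) : u y = u x := by
  induction hconn x y with
  | refl => rfl
  | tail _ hadj ih => exact (hu.eq_of_adj_of_forall_le (ih ▸ hmax) hadj).trans ih

lemma Harmonic.eq_zero_of_finite_support [Infinite V]
    (hconn : ∀ x y : V, Relation.ReflTransGen G.Adj x y) {u : V → ℝ} (hu : G.Harmonic u)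
    (hs : (Function.support u).Finite) : u = 0 := by
  obtain ⟨x, hx⟩ := exists_forall_le_of_finite_support hs
  obtain ⟨z, hz⟩ := Infinite.exists_notMem_finset hs.toFinset
  have hz0 : u z = 0 := Function.notMem_support.mp (by simpa using hz)
  funext y
  rw [hu.eq_of_forall_le hconn hx y, ← hu.eq_of_forall_le hconn hx z, hz0, Pi.zero_apply]

variable (G)

noncomputable def transition (x : V) : V →₀ ℝ :=
  ∑ y ∈ G.nbr x, Finsupp.single y (G.w x y / G.deg x)

noncomputable def lapTranspose : (V →₀ ℝ) →ₗ[ℝ] V →₀ ℝ :=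
  LinearMap.id - Finsupp.linearCombination ℝ G.transition

open scoped Classical in
lemma transition_apply (x y : V) :
    G.transition x y = if G.Adj x y then G.w x y / G.deg x else 0 := by
  simp [transition, Finsupp.finsetSum_apply, Finsupp.single_apply, mem_nbr]

lemma lap_eq_linearCombination (f : V → ℝ) (x : V) :
    G.lap f x = Finsupp.linearCombination ℝ f (G.lapTranspose (Finsupp.single x 1)) := by
  rw [lapTranspose, LinearMap.sub_apply, LinearMap.id_apply, Finsupp.linearCombination_single,
    one_smul, transition, map_sub, map_sum, lap_eq_sum, Finset.mul_sum]
  simp only [Finsupp.linearCombination_single, smul_eq_mul, one_mul]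
  congr 1
  refine Finset.sum_congr rfl fun y _ => by ring

lemma linearCombination_transition_apply (h : V →₀ ℝ) (y : V) :
    Finsupp.linearCombination ℝ G.transition h y = ∑ x ∈ G.nbr y, G.w y x * (h x / G.deg x) := by
  classical
  rw [Finsupp.linearCombination_apply, Finsupp.sum_apply,
    Finsupp.sum_of_support_subset h Finset.subset_union_left _ (by simp),
    ← Finset.sum_subset (Finset.subset_union_right (s₁ := h.support))]
  · refine Finset.sum_congr rfl fun x hx => ?_
    rw [Finsupp.smul_apply, transition_apply, if_pos (G.symm (mem_nbr.mp hx)), G.w_symm,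
      smul_eq_mul]
    ring
  · intro x _ hx
    rw [Finsupp.smul_apply, transition_apply, if_neg fun hadj => hx (mem_nbr.mpr (G.symm hadj)),
      smul_zero]

variable {G}

lemma lapTranspose_injective [Infinite V] (hconn : ∀ x y : V, Relation.ReflTransGen G.Adj x y) :
    Function.Injective G.lapTranspose := by
  refine (injective_iff_map_eq_zero _).mpr fun h hh => ?_
  have hfix (y : V) : h y = ∑ x ∈ G.nbr y, G.w y x * (h x / G.deg x) := by
    have := DFunLike.congr_fun hh y
    rw [lapTranspose, LinearMap.sub_apply, LinearMap.id_apply, Finsupp.sub_apply,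
      linearCombination_transition_apply, Finsupp.coe_zero, Pi.zero_apply] at this
    linarith
  set u : V → ℝ := fun x => h x / G.deg x
  have hu : G.Harmonic u := fun y => by
    rw [lap_eq_sum, ← hfix]
    ring
  have hsupp : (Function.support u).Finite :=
    Set.Finite.subset h.hasFiniteSupport fun x hx hx0 => hx (by simp [u, hx0])
  ext x
  have := congr_fun (hu.eq_zero_of_finite_support hconn hsupp) x
  simpa [u, (G.deg_pos hconn x).ne'] using this

lemma exists_lap_eq_of_lapTranspose_injective (hinj : Function.Injective G.lapTranspose)
    (g : V → ℝ) : ∃ f : V → ℝ, ∀ x, G.lap f x = g x := by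
  obtain ⟨ψ, hψ⟩ := LinearMap.dualMap_surjective_of_injective hinj (Finsupp.linearCombination ℝ g)
  refine ⟨fun x => ψ (Finsupp.single x 1), fun x => ?_⟩
  have hψ_eq : Finsupp.linearCombination ℝ (fun x => ψ (Finsupp.single x 1)) = ψ := by
    ext; simp
  rw [lap_eq_linearCombination, hψ_eq, ← LinearMap.dualMap_apply, hψ,
    Finsupp.linearCombination_single, one_smul]

end WGraph

/-- The Laplacian on an infinite, connected, locally finite weighted graph is
surjective as a linear map `ℝ^Γ → ℝ^Γ`. -/
theorem laplacian_surjective {V : Type*} [Infinite V] (G : WGraph V)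
    (hconn : ∀ x y : V, Relation.ReflTransGen G.Adj x y) :
    ∀ g : V → ℝ, ∃ f : V → ℝ, ∀ x : V, G.lap f x = g x :=
  G.exists_lap_eq_of_lapTranspose_injective (G.lapTranspose_injective hconn)
end

section
/- Let G be an infinite group and μ a (not necessarily symmetric) finitely supported generating probability measure on G. Then the Laplacian Δ_μ, defined by Δ_μ f(x) = f(x) − Σ_{s} μ(s) f(xs), is surjective as a linear map ℝ^G → ℝ^G. -/
/-!
Identify `ℝ^G` with the algebraic dual of the space `ℝ[G]` of finitely supported functions.
Under this identification `Δ_μ` is the transpose of the operator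
`T φ (y) = φ y - ∑ μ s φ (y s⁻¹)`, the Laplacian of the reflected measure `μ'(g) = μ(g⁻¹)`.
The transpose of an injective map between vector spaces is surjective, so it suffices that `T`
has trivial kernel. An element of the kernel is a finitely supported `μ'`-harmonic function;
by the strong maximum principle, since the support of `μ` generates `G`, it is constant once it
attains its maximum, and a constant finitely supported function on an infinite group vanishes.
-/

open Finsupp

section Duality

variable {k X : Type*} [Field k]

theorem Finsupp.exists_linearCombination_map_single_eq_of_injective
    {T : (X →₀ k) →ₗ[k] (X →₀ k)} (hT : Function.Injective T) (g : X → k) :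
    ∃ f : X → k, ∀ x, linearCombination k f (T (single x 1)) = g x := by
  obtain ⟨Ψ, hΨ⟩ := LinearMap.dualMap_surjective_of_injective hT (linearCombination k g)
  have hf : linearCombination k (fun x => Ψ (single x 1)) = Ψ :=
    Finsupp.lhom_ext fun x c => by
      rw [linearCombination_single, ← map_smul, smul_single_one]
  refine ⟨fun x => Ψ (single x 1), fun x => ?_⟩
  rw [hf, ← LinearMap.dualMap_apply, hΨ, linearCombination_single, smul_eq_mul, one_mul]

end Duality

section Laplacian

variable {G R : Type*} [Group G] [CommRing R]

noncomputable def predualLaplacian (μ : G →₀ R) : (G →₀ R) →ₗ[R] (G →₀ R) :=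
  LinearMap.id - ∑ s ∈ μ.support, μ s • lmapDomain R R (· * s)

theorem predualLaplacian_apply (μ : G →₀ R) (φ : G →₀ R) (y : G) :
    predualLaplacian μ φ y = φ y - ∑ s ∈ μ.support, μ s * φ (y * s⁻¹) := by
  have hmap : ∀ s, mapDomain (· * s) φ y = φ (y * s⁻¹) := fun s => by
    simpa using mapDomain_apply (mul_left_injective s) φ (y * s⁻¹)
  simp [predualLaplacian, hmap]

theorem linearCombination_predualLaplacian_single (μ : G →₀ R) (f : G → R) (x : G) :
    linearCombination R f (predualLaplacian μ (single x 1)) =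
      f x - ∑ s ∈ μ.support, μ s * f (x * s) := by
  simp [predualLaplacian, mapDomain_single, map_sum]

end Laplacian

section MaximumPrinciple

variable {G : Type*} [Group G] {μ : G →₀ ℝ}

theorem eq_of_harmonic_of_mem_closure (hpos : ∀ s, 0 ≤ μ s)
    (hsum : ∑ s ∈ μ.support, μ s = 1) {ψ : G → ℝ}
    (hψ : ∀ y, ψ y = ∑ s ∈ μ.support, μ s * ψ (y * s⁻¹)) {M : ℝ} (hle : ∀ z, ψ z ≤ M)
    {w : G} (hw : w ∈ Subsemigroup.closure (μ.support : Set G)) :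
    ∀ y, ψ y = M → ψ (y * w⁻¹) = M := by
  induction hw using Subsemigroup.closure_induction with
  | mem s hs =>
    intro y hy
    have hsums : ∑ t ∈ μ.support, μ t * ψ (y * t⁻¹) = ∑ t ∈ μ.support, μ t * M := by
      rw [← hψ y, ← Finset.sum_mul, hsum, one_mul, hy]
    have heach := (Finset.sum_eq_sum_iff_of_le
      fun t _ => mul_le_mul_of_nonneg_left (hle _) (hpos t)).mp hsums s hs
    exact mul_left_cancel₀ (mem_support_iff.mp hs) heach
  | mul u v _ _ hu hv =>
    intro y hy
    rw [mul_inv_rev, ← mul_assoc]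
    exact hu _ (hv y hy)

theorem harmonic_eq_of_isMax (hpos : ∀ s, 0 ≤ μ s) (hsum : ∑ s ∈ μ.support, μ s = 1)
    (hgen : Subsemigroup.closure (μ.support : Set G) = ⊤) {ψ : G → ℝ}
    (hψ : ∀ y, ψ y = ∑ s ∈ μ.support, μ s * ψ (y * s⁻¹)) {M : ℝ} (hle : ∀ z, ψ z ≤ M)
    {y : G} (hy : ψ y = M) (z : G) : ψ z = M := by
  have hw : z⁻¹ * y ∈ Subsemigroup.closure (μ.support : Set G) := hgen ▸ trivial
  simpa using eq_of_harmonic_of_mem_closure hpos hsum hψ hle hw y hy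

theorem Finsupp.nonpos_of_harmonic [Infinite G] (hpos : ∀ s, 0 ≤ μ s)
    (hsum : ∑ s ∈ μ.support, μ s = 1)
    (hgen : Subsemigroup.closure (μ.support : Set G) = ⊤) {ψ : G →₀ ℝ}
    (hψ : ∀ y, ψ y = ∑ s ∈ μ.support, μ s * ψ (y * s⁻¹)) (a : G) : ψ a ≤ 0 := by
  by_contra! ha
  have hne : ψ.support.Nonempty := ⟨a, mem_support_iff.mpr ha.ne'⟩
  set M := ψ.support.sup' hne ψ
  have hM : 0 < M := ha.trans_le (Finset.le_sup' ψ (mem_support_iff.mpr ha.ne'))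
  have hle : ∀ z, ψ z ≤ M := fun z => by
    by_cases hz : z ∈ ψ.support
    · exact Finset.le_sup' ψ hz
    · rw [notMem_support_iff.mp hz]; exact hM.le
  obtain ⟨y, -, hy⟩ := Finset.exists_mem_eq_sup' hne ψ
  obtain ⟨z, hz⟩ := Infinite.exists_notMem_finset ψ.support
  have hz0 : ψ z = M := harmonic_eq_of_isMax hpos hsum hgen hψ hle hy.symm z
  exact hM.ne' (hz0 ▸ notMem_support_iff.mp hz)

theorem predualLaplacian_injective [Infinite G] (hpos : ∀ s, 0 ≤ μ s)
    (hsum : ∑ s ∈ μ.support, μ s = 1)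
    (hgen : Subsemigroup.closure (μ.support : Set G) = ⊤) :
    Function.Injective (predualLaplacian μ) := by
  have harmonic : ∀ ψ, predualLaplacian μ ψ = 0 →
      ∀ y, ψ y = ∑ s ∈ μ.support, μ s * ψ (y * s⁻¹) := fun ψ hψ y => by
    have := predualLaplacian_apply μ ψ y
    rw [hψ, coe_zero, Pi.zero_apply] at this
    linarith
  refine (injective_iff_map_eq_zero _).mpr fun ψ hψ => Finsupp.ext fun a => ?_
  have hneg : predualLaplacian μ (-ψ) = 0 := by rw [map_neg, hψ, neg_zero]
  have h₁ := Finsupp.nonpos_of_harmonic hpos hsum hgen (harmonic ψ hψ) a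
  have h₂ := Finsupp.nonpos_of_harmonic hpos hsum hgen (harmonic _ hneg) a
  rw [Finsupp.neg_apply] at h₂
  exact le_antisymm h₁ (neg_nonpos.mp h₂)

end MaximumPrinciple

theorem group_laplacian_surjective {G : Type*} [Group G] [Infinite G]
    (μ : G →₀ ℝ)
    (hpos : ∀ s, 0 ≤ μ s)
    (hsum : μ.sum (fun _ v => v) = 1)
    (hgen : Subsemigroup.closure (μ.support : Set G) = ⊤) :
    ∀ g : G → ℝ, ∃ f : G → ℝ, ∀ x : G,
      f x - ∑ s ∈ μ.support, μ s * f (x * s) = g x := by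
  intro g
  obtain ⟨f, hf⟩ := Finsupp.exists_linearCombination_map_single_eq_of_injective
    (predualLaplacian_injective hpos hsum hgen) g
  exact ⟨f, fun x => by rw [← hf x, linearCombination_predualLaplacian_single]⟩
end

section
/- Let Γ be a locally finite weighted graph and X ⊂ Γ a finite subset. Then the image Δ(ℝ^Γ_{Γ∖X}) of the space of functions supported on Γ∖X under the Laplacian equals all of Δ(ℝ^Γ) if and only if every function f : X → ℝ extends to a harmonic function on all of Γ. -/
theorem AddMonoidHom.image_eq_range_iff {A B : Type*} [AddGroup A] [AddGroup B] (f : A →+ B)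
    (S : Set A) : f '' S = Set.range f ↔ ∀ a, ∃ k, f k = 0 ∧ a - k ∈ S := by
  constructor
  · intro h a
    obtain ⟨s, hs, hfs⟩ : f a ∈ f '' S := h ▸ Set.mem_range_self a
    refine ⟨-s + a, by rw [map_add, map_neg, hfs, neg_add_cancel], ?_⟩
    rwa [sub_eq_add_neg, neg_add_rev, neg_neg, add_neg_cancel_left]
  · intro h
    refine (Set.image_subset_range f S).antisymm ?_
    rintro _ ⟨a, rfl⟩
    obtain ⟨k, hk, hak⟩ := h a
    exact ⟨a - k, hak, by rw [map_sub, hk, sub_zero]⟩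

namespace WGraph

variable {V : Type*} (G : WGraph V)

theorem lap_sub (a b : V → ℝ) (x : V) :
    G.lap (fun y => a y - b y) x = G.lap a x - G.lap b x := by
  simp only [lap, mul_sub]
  rw [finsum_mem_sub_distrib _ _ (G.locFin x)]
  ring

noncomputable def lapHom : (V → ℝ) →+ (V → ℝ) :=
  AddMonoidHom.ofMapSub G.lap fun a b => funext (G.lap_sub a b)

theorem harmonic_iff_lapHom_eq_zero (f : V → ℝ) : G.Harmonic f ↔ G.lapHom f = 0 :=
  funext_iff.symm

end WGraph

theorem image_laplacian_restricted_eq_iff_extension_general {V : Type*} (G : WGraph V)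
    (X : Set V) :
    (fun f : V → ℝ => G.lap f) '' {f | ∀ x ∈ X, f x = 0} =
        (fun f : V → ℝ => G.lap f) '' Set.univ ↔
      ∀ f₀ : V → ℝ, ∃ h : V → ℝ, G.Harmonic h ∧ ∀ x ∈ X, h x = f₀ x := by
  rw [Set.image_univ]
  refine (G.lapHom.image_eq_range_iff _).trans ?_
  refine forall_congr' fun f₀ => exists_congr fun h => ?_
  simp only [← G.harmonic_iff_lapHom_eq_zero, Set.mem_ofPred_eq, Pi.sub_apply, sub_eq_zero, eq_comm]

theorem image_laplacian_restricted_eq_iff_extension {V : Type*} (G : WGraph V)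
    (X : Set V) (hX : X.Finite) :
    (fun f : V → ℝ => G.lap f) '' {f | ∀ x ∈ X, f x = 0} =
        (fun f : V → ℝ => G.lap f) '' Set.univ ↔
      ∀ f₀ : V → ℝ, ∃ h : V → ℝ, G.Harmonic h ∧ ∀ x ∈ X, h x = f₀ x :=
  image_laplacian_restricted_eq_iff_extension_general G X
end

section
/- Let Γ be a locally finite vertex-transitive weighted graph and n ∈ ℕ. Then for all vertices x, y, the probability that the random walk started at x returns to x at time n without visiting y at any time 1,…,n−1 equals the probability that the random walk started at y returns to y at time n without visiting x at any time 1,…,n−1. -/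
open Classical

namespace WGraph

variable {V : Type*} (G : WGraph V)

/-- A permutation of the vertices is an automorphism of the weighted graph if it
preserves adjacency and weights. -/
def IsAut (g : Equiv.Perm V) : Prop :=
  ∀ x y : V, (G.Adj x y ↔ G.Adj (g x) (g y)) ∧ G.w (g x) (g y) = G.w x y

/-- The graph is vertex-transitive: automorphisms act transitively on vertices. -/
def VertexTransitive : Prop :=
  ∀ x y : V, ∃ g : Equiv.Perm V, G.IsAut g ∧ g x = y

/-- One-step transition probability of the random walk: `ω_{xy} / deg x`. -/
noncomputable def step (x y : V) : ℝ :=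
  if G.Adj x y then G.w x y / G.deg x else 0

/-- The probability that the random walk follows the trajectory
`f 0, f 1, …, f n` (conditioned on starting at `f 0`). -/
noncomputable def trajProb {n : ℕ} (f : Fin (n + 1) → V) : ℝ :=
  ∏ i : Fin n, G.step (f i.castSucc) (f i.succ)

/-- `P_x[T_y = n]`: the probability that the walk started at `x` first hits `y`
at time exactly `n`. -/
noncomputable def firstHitProb (x y : V) (n : ℕ) : ℝ :=
  ∑ᶠ f : Fin (n + 1) → V,
    if f 0 = x ∧ f (Fin.last n) = y ∧ (∀ i : Fin (n + 1), i ≠ Fin.last n → f i ≠ y)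
    then G.trajProb f else 0

/-- `P_x[T_y < ∞]`: the probability that the walk started at `x` ever hits `y`. -/
noncomputable def hitProb (x y : V) : ℝ := ∑' n : ℕ, G.firstHitProb x y n

/-- The probability that the walk started at `e` first returns to `e` at time
exactly `m`. -/
noncomputable def firstReturnProb (e : V) (m : ℕ) : ℝ :=
  ∑ᶠ f : Fin (m + 1) → V,
    if f 0 = e ∧ f (Fin.last m) = e ∧
        (∀ i : Fin (m + 1), i ≠ 0 → i ≠ Fin.last m → f i ≠ e)
    then G.trajProb f else 0

/-- The random walk is transient at `e`: the return probability is `< 1`. -/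
noncomputable def Transient (e : V) : Prop :=
  ∑' n : ℕ, G.firstReturnProb e (n + 1) < 1

end WGraph

/-!
Killing the walk on entering `y` turns the transition matrix `P` into `Q = P (1 - E_yy)`, and
the telescoping identity `P^n = Q^n + ∑ Q^k (P - Q) P^(n-1-k)` is the renewal equation at the
first visit to `y`. Applied at the entries `(x, y)`, with `P` symmetric (vertex-transitive graphs
are regular) and `P^m x x = P^m y y` (transitivity), it shows by induction that the
first-hitting probabilities `(Q^k P) x y` of `y` from `x` and of `x` from `y` agree; applied at
`(x, x)` and `(y, y)` it then gives the theorem. Paths of length `n` from `x` or `y` stay in a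
finite ball, so all of this happens with finite matrices.
-/

theorem pow_eq_pow_add_sum {A : Type*} [Ring A] (a b : A) (n : ℕ) :
    a ^ n = b ^ n + ∑ k ∈ Finset.range n, b ^ k * (a - b) * a ^ (n - 1 - k) := by
  induction n with
  | zero => simp
  | succ n ih =>
    have hexp : ∀ k ∈ Finset.range n, b ^ (k + 1) * (a - b) * a ^ (n + 1 - 1 - (k + 1))
        = b * (b ^ k * (a - b) * a ^ (n - 1 - k)) := fun k _ => by
      rw [show n + 1 - 1 - (k + 1) = n - 1 - k by omega, pow_succ']
      simp only [mul_assoc]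
    rw [Finset.sum_range_succ', Finset.sum_congr rfl hexp, ← Finset.mul_sum,
      ← sub_eq_iff_eq_add'.mpr ih]
    simp only [pow_zero, one_mul, Nat.add_sub_cancel, Nat.sub_zero, pow_succ']
    noncomm_ring

theorem Fin.forall_interior_ne_iff {α : Type*} {m : ℕ} {f : Fin (m + 1) → α} {y : α}
    (hlast : f (Fin.last m) ≠ y) :
    (∀ i : Fin (m + 1), i ≠ 0 → i ≠ Fin.last m → f i ≠ y) ↔
      ∀ i : Fin m, f i.succ ≠ y := by
  constructor
  · intro h i
    by_cases hi : i.succ = Fin.last m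
    · rwa [hi]
    · exact h _ i.succ_ne_zero hi
  · intro h i hi0 _
    obtain ⟨j, rfl⟩ := Fin.exists_succ_eq.mpr hi0
    exact h j

namespace Matrix

variable {ι R : Type*} [Fintype ι] [DecidableEq ι]

theorem mul_single_one_mul_apply [Semiring R] (X Y : Matrix ι ι R) (i a b : ι) :
    (X * single i i (1 : R) * Y) a b = X a i * Y i b := by
  simp [mul_apply, single, ite_and]

theorem pow_apply_eq_sum_paths [CommSemiring R] (M : Matrix ι ι R) (n : ℕ) (a b : ι) :
    (M ^ n) a b = ∑ f : Fin (n + 1) → ι,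
      if f 0 = a ∧ f (Fin.last n) = b then ∏ i : Fin n, M (f i.castSucc) (f i.succ) else 0 := by
  induction n generalizing a with
  | zero =>
    rw [← (Equiv.funUnique (Fin 1) ι).symm.sum_comp]
    simp [one_apply, ite_and]
  | succ n ih =>
    rw [pow_succ', mul_apply, ← (Fin.consEquiv fun _ => ι).sum_comp, Fintype.sum_prod_type]
    simp only [ih, Finset.mul_sum, Fin.consEquiv_apply, Fin.cons_zero, Fin.prod_univ_succ,
      Fin.castSucc_zero, ← Fin.succ_last, Fin.cons_succ, ← Fin.succ_castSucc, ite_and, mul_ite,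
      mul_zero]
    rw [Finset.sum_comm]
    simp [Finset.sum_ite_eq']

/-- The transition matrix of the walk killed on entering `y`. -/
def taboo [Ring R] (P : Matrix ι ι R) (y : ι) : Matrix ι ι R := P * (1 - single y y 1)

theorem taboo_apply [Ring R] (P : Matrix ι ι R) (y u v : ι) :
    P.taboo y u v = if v = y then 0 else P u v := by
  by_cases h : v = y
  · subst h; simp [taboo, mul_sub]
  · simp [taboo, mul_sub, h]

theorem taboo_pow_apply_eq_sum_paths [CommRing R] (M : Matrix ι ι R) (y : ι) (n : ℕ)
    (a b : ι) :
    (M.taboo y ^ n) a b = ∑ f : Fin (n + 1) → ι,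
      if f 0 = a ∧ f (Fin.last n) = b ∧ ∀ i : Fin n, f i.succ ≠ y
      then ∏ i : Fin n, M (f i.castSucc) (f i.succ) else 0 := by
  rw [pow_apply_eq_sum_paths]
  refine Finset.sum_congr rfl fun f _ => ?_
  simp only [taboo_apply]
  rw [Finset.prod_congr rfl fun i _ => (ite_not _ _ _).symm, Finset.prod_ite_zero]
  simp only [Finset.mem_univ, true_implies, ← ite_and, and_assoc]

theorem taboo_pow_apply_of_ne [Ring R] (P : Matrix ι ι R) {x y : ι} (hxy : x ≠ y) (n : ℕ) :
    (P.taboo y ^ n) x y = 0 := by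
  cases n with
  | zero => exact one_apply_ne hxy
  | succ n => simp [pow_succ, mul_apply, taboo_apply]

theorem pow_apply_eq_taboo_pow_add [Ring R] (P : Matrix ι ι R) (y x z : ι) (n : ℕ) :
    (P ^ n) x z = (P.taboo y ^ n) x z +
      ∑ k ∈ Finset.range n, (P.taboo y ^ k * P) x y * (P ^ (n - 1 - k)) y z := by
  have hdiff : P - P.taboo y = P * single y y 1 := by simp [taboo, mul_sub]
  rw [pow_eq_pow_add_sum P (P.taboo y) n, add_apply, sum_apply, hdiff]
  simp only [← Matrix.mul_assoc, mul_single_one_mul_apply]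

theorem pow_apply_eq_sum_taboo_pow_mul [Ring R] (P : Matrix ι ι R) {x y : ι} (hxy : x ≠ y)
    (n : ℕ) :
    (P ^ n) x y = ∑ k ∈ Finset.range n, (P.taboo y ^ k * P) x y * (P ^ (n - 1 - k)) y y := by
  simpa [taboo_pow_apply_of_ne P hxy] using pow_apply_eq_taboo_pow_add P y x y n

theorem taboo_pow_mul_apply_symm [CommRing R] {P : Matrix ι ι R} (hP : P.IsSymm) {x y : ι}
    (hxy : x ≠ y) {n : ℕ} (hdiag : ∀ m < n, (P ^ m) x x = (P ^ m) y y) {k : ℕ}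
    (hk : k < n) :
    (P.taboo y ^ k * P) x y = (P.taboo x ^ k * P) y x := by
  induction k using Nat.strong_induction_on with
  | _ k ih =>
    have hxy' := pow_apply_eq_sum_taboo_pow_mul P hxy (k + 1)
    have hyx' := pow_apply_eq_sum_taboo_pow_mul P hxy.symm (k + 1)
    have hsymm : (P ^ (k + 1)) x y = (P ^ (k + 1)) y x := (hP.pow (k + 1)).apply y x
    have hsum : ∑ j ∈ Finset.range k, (P.taboo y ^ j * P) x y * (P ^ (k - j)) y y
        = ∑ j ∈ Finset.range k, (P.taboo x ^ j * P) y x * (P ^ (k - j)) x x := by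
      refine Finset.sum_congr rfl fun j hj => ?_
      have hj := Finset.mem_range.mp hj
      rw [ih j hj (hj.trans hk), hdiag _ (by omega)]
    rw [Finset.sum_range_succ] at hxy' hyx'
    simp only [Nat.add_sub_cancel, Nat.sub_self, pow_zero, one_apply_eq, mul_one] at hxy' hyx'
    linear_combination hxy'.symm + hsymm + hyx' - hsum

theorem taboo_pow_apply_symm [CommRing R] {P : Matrix ι ι R} (hP : P.IsSymm) {x y : ι}
    (hxy : x ≠ y) {n : ℕ} (hdiag : ∀ m ≤ n, (P ^ m) x x = (P ^ m) y y) :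
    (P.taboo y ^ n) x x = (P.taboo x ^ n) y y := by
  have hx := pow_apply_eq_taboo_pow_add P y x x n
  have hy := pow_apply_eq_taboo_pow_add P x y y n
  have hsum : ∑ k ∈ Finset.range n, (P.taboo y ^ k * P) x y * (P ^ (n - 1 - k)) y x
      = ∑ k ∈ Finset.range n, (P.taboo x ^ k * P) y x * (P ^ (n - 1 - k)) x y := by
    refine Finset.sum_congr rfl fun k hk => ?_
    rw [taboo_pow_mul_apply_symm hP hxy (fun m hm => hdiag m hm.le) (Finset.mem_range.mp hk),
      (hP.pow _).apply x y]
  linear_combination hx.symm + hdiag n le_rfl + hy - hsum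

end Matrix

namespace WGraph

variable {V : Type*} (G : WGraph V)

/-- `P_x[X_n = x]`. -/
noncomputable def returnProb (x : V) (n : ℕ) : ℝ :=
  ∑ᶠ f : Fin (n + 1) → V, if f 0 = x ∧ f (Fin.last n) = x then G.trajProb f else 0

theorem deg_isAut {g : Equiv.Perm V} (hg : G.IsAut g) (x : V) : G.deg (g x) = G.deg x := by
  simp only [deg, finsum_mem_def]
  rw [← finsum_comp_equiv g]
  refine finsum_congr fun y => ?_
  simp [Set.indicator, ← (hg x y).1, (hg x y).2]

theorem step_isAut {g : Equiv.Perm V} (hg : G.IsAut g) (a b : V) :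
    G.step (g a) (g b) = G.step a b := by
  simp only [step, G.deg_isAut hg, ← (hg a b).1, (hg a b).2]

theorem trajProb_comp_isAut {g : Equiv.Perm V} (hg : G.IsAut g) {n : ℕ} (f : Fin (n + 1) → V) :
    G.trajProb (g ∘ f) = G.trajProb f :=
  Finset.prod_congr rfl fun _ _ => G.step_isAut hg _ _

theorem returnProb_isAut {g : Equiv.Perm V} (hg : G.IsAut g) (x : V) (n : ℕ) :
    G.returnProb (g x) n = G.returnProb x n := by
  rw [returnProb, ← finsum_comp_equiv ((Equiv.refl _).arrowCongr g)]
  refine finsum_congr fun f => ?_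
  change (if g (f 0) = g x ∧ g (f (Fin.last n)) = g x then G.trajProb (g ∘ f) else 0) = _
  simp only [g.apply_eq_iff_eq, G.trajProb_comp_isAut hg]

variable {G}

theorem VertexTransitive.deg_eq (htrans : G.VertexTransitive) (x y : V) : G.deg x = G.deg y := by
  obtain ⟨g, hg, rfl⟩ := htrans x y
  exact (G.deg_isAut hg x).symm

theorem VertexTransitive.step_comm (htrans : G.VertexTransitive) (a b : V) :
    G.step a b = G.step b a := by
  by_cases h : G.Adj a b
  · simp [step, h, G.symm h, G.w_symm a b, htrans.deg_eq a b]
  · simp [step, h, show ¬G.Adj b a from fun h' => h (G.symm h')]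

theorem VertexTransitive.returnProb_eq (htrans : G.VertexTransitive) (x y : V) (n : ℕ) :
    G.returnProb x n = G.returnProb y n := by
  obtain ⟨g, hg, rfl⟩ := htrans x y
  exact (G.returnProb_isAut hg x n).symm

variable (G)

def IsWalk {m : ℕ} (f : Fin (m + 1) → V) : Prop :=
  ∀ i : Fin m, G.Adj (f i.castSucc) (f i.succ)

theorem isWalk_of_trajProb_ne_zero {m : ℕ} {f : Fin (m + 1) → V} (h : G.trajProb f ≠ 0) :
    G.IsWalk f := by
  intro i
  by_contra hi
  exact h (Finset.prod_eq_zero (Finset.mem_univ i) (if_neg hi))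

def ball (s : V) : ℕ → Set V
  | 0 => {s}
  | k + 1 => ball s k ∪ ⋃ v ∈ ball s k, {w | G.Adj v w}

theorem finite_ball (s : V) (k : ℕ) : (G.ball s k).Finite := by
  induction k with
  | zero => exact Set.finite_singleton s
  | succ k ih => exact ih.union (ih.biUnion fun v _ => G.locFin v)

theorem ball_mono (s : V) : Monotone (G.ball s) :=
  monotone_nat_of_le_succ fun _ => Set.subset_union_left

theorem self_mem_ball (s : V) (k : ℕ) : s ∈ G.ball s k :=
  G.ball_mono s k.zero_le rfl

variable {G} in
theorem IsWalk.mem_ball {m : ℕ} {f : Fin (m + 1) → V} (hf : G.IsWalk f) (i : Fin (m + 1)) :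
    f i ∈ G.ball (f 0) m := by
  suffices h : ∀ i : Fin (m + 1), f i ∈ G.ball (f 0) i from G.ball_mono _ i.is_le (h i)
  intro i
  induction i using Fin.induction with
  | zero => rfl
  | succ i ih => exact Or.inr (Set.mem_biUnion ih (hf i))

noncomputable def stepMatrix (S : Finset V) : Matrix S S ℝ :=
  Matrix.of fun u v => G.step u v

theorem isSymm_stepMatrix (htrans : G.VertexTransitive) (S : Finset V) :
    (G.stepMatrix S).IsSymm :=
  Matrix.IsSymm.ext fun u v => htrans.step_comm v u

theorem finsum_eq_sum_subtype {S : Finset V} {s : V} {m : ℕ} (hS : G.ball s m ⊆ S)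
    (φ : (Fin (m + 1) → V) → ℝ)
    (hφ : ∀ f, φ f ≠ 0 → f 0 = s ∧ G.trajProb f ≠ 0) :
    ∑ᶠ f, φ f = ∑ f : Fin (m + 1) → S, φ (Subtype.val ∘ f) := by
  let e : (Fin (m + 1) → S) ↪ (Fin (m + 1) → V) :=
    ⟨(Subtype.val ∘ ·), Subtype.val_injective.comp_left⟩
  rw [finsum_eq_sum_of_support_subset φ (s := Finset.univ.map e), Finset.sum_map]
  · rfl
  intro f hf
  obtain ⟨h0, htraj⟩ := hφ f hf
  have hmem i : f i ∈ S := hS (h0 ▸ (G.isWalk_of_trajProb_ne_zero htraj).mem_ball i)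
  exact Finset.mem_map.mpr ⟨fun i => ⟨f i, hmem i⟩, Finset.mem_univ _, rfl⟩

theorem returnProb_eq_stepMatrix_pow {S : Finset V} {s : V} {m : ℕ} (hS : G.ball s m ⊆ S)
    (hs : s ∈ S) : G.returnProb s m = (G.stepMatrix S ^ m) ⟨s, hs⟩ ⟨s, hs⟩ := by
  rw [returnProb, G.finsum_eq_sum_subtype hS _ fun f hf => (ite_ne_right_iff.mp hf).imp And.left id,
    Matrix.pow_apply_eq_sum_paths]
  refine Finset.sum_congr rfl fun f _ => ?_
  simp [Subtype.ext_iff, stepMatrix, trajProb]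

theorem finsum_return_avoiding_eq_taboo_pow {S : Finset V} {x y : V} {m : ℕ}
    (hS : G.ball x m ⊆ S) (hx : x ∈ S) (hy : y ∈ S) (hxy : x ≠ y) :
    (∑ᶠ f : Fin (m + 1) → V,
        if f 0 = x ∧ f (Fin.last m) = x ∧
            (∀ i : Fin (m + 1), i ≠ 0 → i ≠ Fin.last m → f i ≠ y)
        then G.trajProb f else 0) =
      ((G.stepMatrix S).taboo ⟨y, hy⟩ ^ m) ⟨x, hx⟩ ⟨x, hx⟩ := by
  rw [G.finsum_eq_sum_subtype hS _ fun f hf => (ite_ne_right_iff.mp hf).imp And.left id,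
    Matrix.taboo_pow_apply_eq_sum_paths]
  refine Finset.sum_congr rfl fun f _ => if_congr ?_ rfl rfl
  simp only [Function.comp_apply, ne_eq, Subtype.ext_iff]
  refine and_congr_right fun _ => and_congr_right fun hlast => ?_
  exact Fin.forall_interior_ne_iff (f := Subtype.val ∘ f) (hlast.trans_ne hxy)

end WGraph

open WGraph in
/-- In a locally finite vertex-transitive weighted graph, the probability of
returning to `x` at time `n` without visiting `y` at times `1, …, n-1` equals
the probability of returning to `y` at time `n` without visiting `x`. -/
theorem return_avoiding_symm {V : Type*} (G : WGraph V)
    (htrans : G.VertexTransitive) (x y : V) (n : ℕ) :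
    (∑ᶠ f : Fin (n + 1) → V,
        if f 0 = x ∧ f (Fin.last n) = x ∧
            (∀ i : Fin (n + 1), i ≠ 0 → i ≠ Fin.last n → f i ≠ y)
        then G.trajProb f else 0) =
      ∑ᶠ f : Fin (n + 1) → V,
        if f 0 = y ∧ f (Fin.last n) = y ∧
            (∀ i : Fin (n + 1), i ≠ 0 → i ≠ Fin.last n → f i ≠ x)
        then G.trajProb f else 0 := by
  rcases eq_or_ne x y with rfl | hxy
  · rfl
  obtain ⟨S, hxS, hyS⟩ : ∃ S : Finset V, G.ball x n ⊆ S ∧ G.ball y n ⊆ S :=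
    ⟨((G.finite_ball x n).union (G.finite_ball y n)).toFinset, by simp, by simp⟩
  have hx : x ∈ S := hxS (G.self_mem_ball x n)
  have hy : y ∈ S := hyS (G.self_mem_ball y n)
  rw [G.finsum_return_avoiding_eq_taboo_pow hxS hx hy hxy,
    G.finsum_return_avoiding_eq_taboo_pow hyS hy hx hxy.symm]
  refine Matrix.taboo_pow_apply_symm (G.isSymm_stepMatrix htrans S) (by simpa using hxy)
    fun m hm => ?_
  rw [← G.returnProb_eq_stepMatrix_pow ((G.ball_mono x hm).trans hxS),
    ← G.returnProb_eq_stepMatrix_pow ((G.ball_mono y hm).trans hyS), htrans.returnProb_eq]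
end

section
/- Let Γ be a locally finite vertex-transitive weighted graph and let x, y be vertices. Then for each n, the probability starting at x that the first hitting time of y equals n equals the probability starting at y that the first hitting time of x equals n. In particular P_x[T_y < ∞] = P_y[T_x < ∞]. -/
open Classical

/-!
Vertex-transitivity makes the degree constant, so the transition kernel is symmetric and reversing
a path gives `p_n(x, y) = p_n(y, x)`; an automorphism sending `x` to `y` gives
`p_n(x, x) = p_n(y, y)`. Splitting a path at its first visit to `y` yields the renewal identity
`p_n(x, y) = ∑_{k ≤ n} P_x[T_y = k] p_{n-k}(y, y)`, and the same with `x` and `y` swapped.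
The two right-hand sides are convolutions of `P_x[T_y = ·]` and `P_y[T_x = ·]` with the same
sequence `p_·(x, x)`, whose value at `0` is `1`, so the two first-passage distributions agree.
-/

section Finsum

variable {α β M : Type*} [AddCommMonoid M]

theorem finsum_comp_eq_of_support_subset_range {e : α → β} (he : e.Injective) {F : β → M}
    (hF : Function.support F ⊆ Set.range e) : ∑ᶠ a, F (e a) = ∑ᶠ b, F b := by
  rw [← finsum_mem_range he, ← finsum_mem_univ F]
  exact finsum_mem_inter_support_eq' F _ _ fun b hb => by simpa using hF hb

theorem finsum_fiberwise {φ : β → α} {g : β → M} (hg : (Function.support g).Finite) :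
    ∑ᶠ (a) (b), (if φ b = a then g b else 0) = ∑ᶠ b, g b := by
  set F : α × β → M := fun p => if φ p.2 = p.1 then g p.2 else 0
  have hF : (Function.support F).Finite :=
    (hg.image fun b => (φ b, b)).subset fun p hp => by
      by_cases h : φ p.2 = p.1
      · exact ⟨p.2, by simpa [F, h] using hp, Prod.ext h rfl⟩
      · simp [F, h] at hp
  have hF' : (Function.support fun q => F (Equiv.prodComm β α q)).Finite :=
    hF.preimage (Equiv.injective _).injOn
  rw [← finsum_curry F hF, ← finsum_comp_equiv (Equiv.prodComm β α),
    finsum_curry _ hF']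
  exact finsum_congr fun b =>
    (finsum_eq_single _ (φ b) fun a ha => if_neg (Ne.symm ha)).trans (if_pos rfl)

end Finsum

theorem eq_of_forall_sum_range_mul_eq {R : Type*} [Ring R] {a b u : ℕ → R} (hu : u 0 = 1)
    (h : ∀ n, ∑ k ∈ Finset.range (n + 1), a k * u (n - k) =
      ∑ k ∈ Finset.range (n + 1), b k * u (n - k)) (n : ℕ) : a n = b n := by
  induction n using Nat.strong_induction_on with
  | _ n ih =>
    have hn := h n
    rw [Finset.sum_range_succ, Finset.sum_range_succ, Nat.sub_self, hu, mul_one, mul_one,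
      Finset.sum_congr rfl fun k hk => by rw [ih k (Finset.mem_range.mp hk)]] at hn
    exact add_left_cancel hn

namespace WGraph

variable {V : Type*} (G : WGraph V)

/-- `p_n(x, y) = P_x[X_n = y]`. -/
noncomputable def transProb (n : ℕ) (x y : V) : ℝ :=
  ∑ᶠ f : Fin (n + 1) → V, if f 0 = x ∧ f (Fin.last n) = y then G.trajProb f else 0

theorem adj_of_step_ne_zero {x y : V} (h : G.step x y ≠ 0) : G.Adj x y := by
  by_contra hxy
  exact h (if_neg hxy)

theorem trajProb_cons {n : ℕ} (x : V) (t : Fin (n + 1) → V) :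
    G.trajProb (Fin.cons x t) = G.step x (t 0) * G.trajProb t := by
  simp only [trajProb, Fin.prod_univ_succ]
  rfl

theorem finite_setOf_trajProb_ne_zero (n : ℕ) (x : V) :
    {f : Fin (n + 1) → V | f 0 = x ∧ G.trajProb f ≠ 0}.Finite := by
  induction n generalizing x with
  | zero =>
    refine Set.Subsingleton.finite fun f hf f' hf' => funext fun i => ?_
    rw [Fin.fin_one_eq_zero i, hf.1, hf'.1]
  | succ n ih =>
    refine (((G.locFin x).biUnion fun z _ => ih z).image (Fin.cons x)).subset ?_
    rintro f ⟨hf0, hf⟩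
    rw [← Fin.cons_self_tail f, hf0, trajProb_cons] at hf
    refine ⟨Fin.tail f, Set.mem_biUnion ?_ ⟨rfl, right_ne_zero_of_mul hf⟩, ?_⟩
    · exact G.adj_of_step_ne_zero (left_ne_zero_of_mul hf)
    · rw [← hf0, Fin.cons_self_tail]

theorem finite_support_step_mul (x : V) (φ : V → ℝ) :
    (Function.support fun z => G.step x z * φ z).Finite :=
  (G.locFin x).subset fun _ hz => G.adj_of_step_ne_zero (left_ne_zero_of_mul hz)

/-- Conditioning on the first step of the walk. -/
theorem finsum_trajProb_succ {n : ℕ} (x : V) (D : (Fin (n + 2) → V) → Prop)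
    [DecidablePred D] :
    (∑ᶠ f : Fin (n + 2) → V, if f 0 = x ∧ D f then G.trajProb f else 0) =
      ∑ᶠ z, G.step x z *
        ∑ᶠ t : Fin (n + 1) → V, if t 0 = z ∧ D (Fin.cons x t) then G.trajProb t else 0 := by
  set g : (Fin (n + 1) → V) → ℝ :=
    fun t => if D (Fin.cons x t) then G.step x (t 0) * G.trajProb t else 0
  have hg : (Function.support g).Finite := by
    refine ((G.locFin x).biUnion fun z _ => G.finite_setOf_trajProb_ne_zero n z).subset ?_
    intro t ht
    have ht' : G.step x (t 0) * G.trajProb t ≠ 0 := fun h => ht (by simp [g, h])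
    exact Set.mem_biUnion (G.adj_of_step_ne_zero (left_ne_zero_of_mul ht'))
      ⟨rfl, right_ne_zero_of_mul ht'⟩
  calc (∑ᶠ f : Fin (n + 2) → V, if f 0 = x ∧ D f then G.trajProb f else 0)
      = ∑ᶠ t, g t := by
        rw [← finsum_comp_eq_of_support_subset_range (Fin.cons_right_injective x) ?_]
        · simp [g, trajProb_cons]
        · intro f hf
          have hf0 : f 0 = x := by by_contra h; simp [h] at hf
          exact ⟨Fin.tail f, by rw [← hf0, Fin.cons_self_tail]⟩
    _ = ∑ᶠ (z) (t : Fin (n + 1) → V), if t 0 = z then g t else 0 :=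
        (finsum_fiberwise hg).symm
    _ = _ := by
        refine finsum_congr fun z => ?_
        rw [mul_finsum]
        refine finsum_congr fun t => ?_
        by_cases h : t 0 = z <;> by_cases hD : D (Fin.cons x t) <;> simp [g, h, hD]

theorem finsum_trajProb_zero (x : V) (P : (Fin 1 → V) → Prop) [DecidablePred P] :
    (∑ᶠ f : Fin 1 → V, if f 0 = x ∧ P f then G.trajProb f else 0) =
      if P (fun _ => x) then 1 else 0 := by
  rw [finsum_eq_single _ (fun _ => x)]
  · simp [trajProb]
  · intro f hf
    refine if_neg fun h => hf (funext fun i => ?_)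
    rw [Fin.fin_one_eq_zero i, h.1]

theorem transProb_zero (x y : V) : G.transProb 0 x y = if x = y then 1 else 0 :=
  G.finsum_trajProb_zero x _

theorem firstHitProb_zero (x y : V) : G.firstHitProb x y 0 = if x = y then 1 else 0 := by
  rw [firstHitProb, finsum_trajProb_zero]
  simp [Fin.fin_one_eq_zero]

theorem transProb_succ (n : ℕ) (x y : V) :
    G.transProb (n + 1) x y = ∑ᶠ z, G.step x z * G.transProb n z y := by
  rw [transProb, finsum_trajProb_succ]
  simp [transProb, ← Fin.succ_last]

theorem firstHitProb_self_succ (y : V) (n : ℕ) : G.firstHitProb y y (n + 1) = 0 :=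
  finsum_eq_zero_of_forall_eq_zero fun _ =>
    if_neg fun ⟨h0, _, hne⟩ => hne 0 (Fin.last_pos).ne h0

theorem firstHitProb_succ (n : ℕ) {x y : V} (hxy : x ≠ y) :
    G.firstHitProb x y (n + 1) = ∑ᶠ z, G.step x z * G.firstHitProb z y n := by
  rw [firstHitProb, finsum_trajProb_succ]
  simp [firstHitProb, ← Fin.succ_last, Fin.forall_fin_succ, hxy]

theorem transProb_eq_sum_firstHitProb_mul (n : ℕ) (x y : V) :
    G.transProb n x y =
      ∑ k ∈ Finset.range (n + 1), G.firstHitProb x y k * G.transProb (n - k) y y := by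
  induction n generalizing x with
  | zero => simp [transProb_zero, firstHitProb_zero]
  | succ n ih =>
    by_cases hxy : x = y
    · subst hxy
      simp [Finset.sum_range_succ' _ (n + 1), firstHitProb_self_succ, firstHitProb_zero]
    rw [Finset.sum_range_succ', firstHitProb_zero, if_neg hxy, zero_mul, add_zero,
      transProb_succ]
    simp_rw [ih, firstHitProb_succ _ _ hxy, Finset.mul_sum, finsum_mul, Nat.add_sub_add_right,
      mul_assoc]
    exact finsum_sum_comm _ _ fun k _ => G.finite_support_step_mul x _

theorem step_comm_of_deg_eq (hdeg : ∀ a b, G.deg a = G.deg b) (a b : V) :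
    G.step a b = G.step b a := by
  simp only [step, G.w_symm a b, hdeg a b]
  exact if_congr ⟨G.symm, G.symm⟩ rfl rfl

theorem trajProb_comp_rev (hstep : ∀ a b, G.step a b = G.step b a) {n : ℕ}
    (f : Fin (n + 1) → V) : G.trajProb (f ∘ Fin.rev) = G.trajProb f := by
  calc ∏ i : Fin n, G.step (f i.castSucc.rev) (f i.succ.rev)
      = ∏ i : Fin n, G.step (f i.rev.castSucc) (f i.rev.succ) :=
        Finset.prod_congr rfl fun i _ => by rw [Fin.rev_castSucc, Fin.rev_succ, hstep]
    _ = G.trajProb f := Fintype.prod_equiv Fin.revPerm _ _ fun i => rfl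

theorem transProb_comm (hstep : ∀ a b, G.step a b = G.step b a) (n : ℕ) (a b : V) :
    G.transProb n a b = G.transProb n b a := by
  rw [transProb, ← finsum_comp_equiv (Fin.revPerm.arrowCongr (Equiv.refl V))]
  refine finsum_congr fun f => ?_
  rw [show Fin.revPerm.arrowCongr (Equiv.refl V) f = f ∘ Fin.rev from rfl,
    G.trajProb_comp_rev hstep]
  simp [and_comm]

end WGraph

namespace WGraph.IsAut

variable {V : Type*} {G : WGraph V} {g : Equiv.Perm V}

theorem deg_apply (hg : G.IsAut g) (a : V) : G.deg (g a) = G.deg a := by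
  rw [deg, deg, ← finsum_comp_equiv g]
  refine finsum_congr fun z => ?_
  simp only [Set.mem_ofPred_eq, ← (hg a z).1, (hg a z).2]

theorem step_apply (hg : G.IsAut g) (a b : V) : G.step (g a) (g b) = G.step a b := by
  simp only [step, ← (hg a b).1, (hg a b).2, hg.deg_apply]

theorem transProb_apply (hg : G.IsAut g) (n : ℕ) (a b : V) :
    G.transProb n (g a) (g b) = G.transProb n a b := by
  rw [transProb, ← finsum_comp_equiv ((Equiv.refl (Fin (n + 1))).arrowCongr g)]
  refine finsum_congr fun f => ?_
  simp [trajProb, hg.step_apply]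

end WGraph.IsAut

theorem WGraph.VertexTransitive.deg_eq_s14 {V : Type*} {G : WGraph V} (h : G.VertexTransitive)
    (a b : V) : G.deg a = G.deg b := by
  obtain ⟨g, hg, rfl⟩ := h a b
  exact (hg.deg_apply a).symm

/-- In a locally finite vertex-transitive weighted graph,
`P_x[T_y = n] = P_y[T_x = n]` for every `n`; in particular
`P_x[T_y < ∞] = P_y[T_x < ∞]`. -/
theorem firstHitProb_symm {V : Type*} (G : WGraph V)
    (htrans : G.VertexTransitive) (x y : V) :
    (∀ n : ℕ, G.firstHitProb x y n = G.firstHitProb y x n) ∧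
      G.hitProb x y = G.hitProb y x := by
  have hstep := G.step_comm_of_deg_eq htrans.deg_eq_s14
  have hdiag : ∀ m, G.transProb m y y = G.transProb m x x := by
    obtain ⟨g, hg, rfl⟩ := htrans x y
    exact fun m => hg.transProb_apply m x x
  have hfirst : ∀ n, G.firstHitProb x y n = G.firstHitProb y x n := by
    refine eq_of_forall_sum_range_mul_eq (u := fun m => G.transProb m x x)
      (by simp [WGraph.transProb_zero]) fun n => ?_
    rw [← G.transProb_eq_sum_firstHitProb_mul n y x, ← G.transProb_comm hstep,
      G.transProb_eq_sum_firstHitProb_mul]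
    simp only [hdiag]
  exact ⟨hfirst, tsum_congr hfirst⟩
end
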